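/- (Proposition 4(a)) Let ℓ be a nonisotropic cycle with ⟨ℓ, p⟩ = 0, and let u, v be two distinct points of H lying on the line defined by ℓ (i.e., ⟨ℓ, q(u)⟩ = ⟨ℓ, q(v)⟩ = 0). Let T : F → F be a linear map preserving the cycle pairing (⟨T x, T y⟩ = ⟨x, y⟩ for all x, y ∈ F) such that T(p) = p, T(q(u)) = q(u) and T(q(v)) = q(v). Then T is either the identity map of F or the reflection along ℓ, i.e., T(x) = x − 2(⟨x, ℓ⟩/⟨ℓ, ℓ⟩)·ℓ for all x ∈ F. -/

import Mathlib

variable {K : Type*} [Field K] [LinearOrder K] [IsStrictOrderedRing K]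
variable {E : Type*} [AddCommGroup E] [Module K E]

/-- The cycle pairing on the space of cycles `F = K × E × K`:
`⟨(a,b,c),(a',b',c')⟩ = B(b,b') − 2ac' − 2a'c`. -/
def cyc (B : LinearMap.BilinForm K E) (f g : K × E × K) : K :=
  B f.2.1 g.2.1 - 2 * f.1 * g.2.2 - 2 * g.1 * f.2.2

/-- The normalized zero circle centered at `u`: the cycle `(1, −2u, B(u,u))`. -/
def qc (B : LinearMap.BilinForm K E) (u : E) : K × E × K :=
  (1, (-2 : K) • u, B u u)

/-!
The cycles `p`, `q(u)`, `q(v)` are linearly independent: otherwise `i` would be a multiple of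
`u - v` with `B(u,u) = B(v,v)`, forcing `B(i, u + v) = 0`, which is impossible for two points
of `H`. The anisotropic cycle `ℓ` is orthogonal to all three, so it completes them to a basis
of the 4-dimensional space `F`. An isometry `T` fixing `p`, `q(u)`, `q(v)` maps `ℓ` into their
orthogonal complement, which is `K ℓ` by nondegeneracy; hence `T ℓ = ± ℓ`, and `T` agrees on a
basis with the identity or with the reflection along `ℓ`.
-/

namespace LinearMap.BilinForm

variable {𝕜 V : Type*} [Field 𝕜] [AddCommGroup V] [Module 𝕜 V] (β : LinearMap.BilinForm 𝕜 V)

theorem eq_zero_of_forall_mem_apply_eq_zero (hβ : β.SeparatingLeft) {s : Set V}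
    (hs : Submodule.span 𝕜 s = ⊤) {w : V} (hw : ∀ y ∈ s, β w y = 0) : w = 0 :=
  hβ w fun y => LinearMap.congr_fun (LinearMap.ext_on (g := 0) hs hw) y

theorem notMem_span_of_apply_self_ne_zero {l : V} (hl : β l l ≠ 0) {s : Set V}
    (hls : ∀ y ∈ s, β l y = 0) : l ∉ Submodule.span 𝕜 s :=
  fun h => hl (Submodule.span_le (p := LinearMap.ker (β l)) |>.2 hls h)

theorem span_insert_eq_top_of_linearIndependent {n : ℕ} {a : Fin n → V}
    (ha : LinearIndependent 𝕜 a) {l : V} (hl : β l l ≠ 0) (hla : ∀ j, β l (a j) = 0)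
    (hdim : Module.finrank 𝕜 V = n + 1) :
    Submodule.span 𝕜 (insert l (Set.range a)) = ⊤ := by
  have hli := ha.finCons (β.notMem_span_of_apply_self_ne_zero hl (Set.forall_mem_range.2 hla))
  rw [← Fin.range_cons]
  exact hli.span_eq_top_of_card_eq_finrank (by simp [hdim])

variable {β} {ι : Type*} {a : ι → V} {T : V →ₗ[𝕜] V} {l : V}

theorem apply_eq_self_or_neg_of_isometry (hβ : β.SeparatingLeft)
    (hT : ∀ x y, β (T x) (T y) = β x y) (hl : β l l ≠ 0) (hla : ∀ j, β l (a j) = 0)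
    (hspan : Submodule.span 𝕜 (insert l (Set.range a)) = ⊤) (hTa : ∀ j, T (a j) = a j) :
    T l = l ∨ T l = -l := by
  set c := β (T l) l / β l l
  have hTl : T l = c • l := by
    refine sub_eq_zero.1 (β.eq_zero_of_forall_mem_apply_eq_zero hβ hspan ?_)
    rintro y (rfl | ⟨j, rfl⟩)
    · simp [c, div_mul_cancel₀ _ hl]
    · have hTla := hT l (a j)
      rw [hTa j] at hTla
      simp [hTla, hla j]
  have hc : c * c = 1 := by
    have := hT l l
    simp only [hTl, map_smul, LinearMap.smul_apply, smul_eq_mul] at this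
    exact mul_right_cancel₀ hl (by rw [one_mul, mul_assoc, this])
  rcases mul_self_eq_one_iff.1 hc with h | h <;> simp [hTl, h]

theorem eq_id_or_reflection_of_isometry (hβ : β.SeparatingLeft) (hsymm : β.IsSymm)
    (hT : ∀ x y, β (T x) (T y) = β x y) (hl : β l l ≠ 0) (hla : ∀ j, β l (a j) = 0)
    (hspan : Submodule.span 𝕜 (insert l (Set.range a)) = ⊤) (hTa : ∀ j, T (a j) = a j) :
    T = LinearMap.id ∨ ∀ x, T x = x - (2 * (β x l / β l l)) • l := by
  rcases apply_eq_self_or_neg_of_isometry hβ hT hl hla hspan hTa with hTl | hTl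
  · left
    refine LinearMap.ext_on hspan ?_
    rintro y (rfl | ⟨j, rfl⟩)
    exacts [hTl, hTa j]
  · right
    set f : Module.Dual 𝕜 V := (2 / β l l) • β.flip l
    have hfl : f l = 2 := by simp [f, div_mul_cancel₀ _ hl]
    have hTf : T = Module.preReflection l f := by
      refine LinearMap.ext_on hspan ?_
      rintro y (rfl | ⟨j, rfl⟩)
      · rw [hTl, Module.preReflection_apply_self hfl]
      · simp [Module.preReflection_apply, hTa j, f, hsymm.eq (a j) l, hla j]
    intro x
    rw [hTf, Module.preReflection_apply]
    congr 2
    simp only [f, LinearMap.smul_apply, LinearMap.BilinForm.flip_apply, smul_eq_mul]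
    ring

end LinearMap.BilinForm

section Cycles

variable {𝕜 W : Type*} [Field 𝕜] [AddCommGroup W] [Module 𝕜 W] (B : LinearMap.BilinForm 𝕜 W)

def cycForm : LinearMap.BilinForm 𝕜 (𝕜 × W × 𝕜) :=
  LinearMap.mk₂ 𝕜 (cyc B) (fun _ _ _ => by simp [cyc]; ring) (fun _ _ _ => by simp [cyc]; ring)
    (fun _ _ _ => by simp [cyc]; ring) (fun _ _ _ => by simp [cyc]; ring)

@[simp]
theorem cycForm_apply (f g : 𝕜 × W × 𝕜) : cycForm B f g = cyc B f g := rfl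

variable {B}

theorem isSymm_cycForm (hB : B.IsSymm) : (cycForm B).IsSymm :=
  ⟨fun f g => by simp only [cycForm_apply, cyc, hB.eq f.2.1 g.2.1]; ring⟩

theorem notMem_span_qc_qc (hB : B.IsSymm) {i u v : W} (huv : B i u + B i v ≠ 0) :
    ((0 : 𝕜), i, (0 : 𝕜)) ∉ Submodule.span 𝕜 (Set.range ![qc B u, qc B v]) := by
  rw [Submodule.mem_span_range_iff_exists_fun]
  rintro ⟨c, hc⟩
  simp only [Fin.sum_univ_two, Matrix.cons_val_zero, Matrix.cons_val_one, qc, Prod.smul_mk,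
    Prod.mk_add_mk, Prod.mk.injEq, smul_eq_mul] at hc
  obtain ⟨h₁, rfl, h₃⟩ := hc
  refine huv ?_
  simp only [map_add, map_smul, LinearMap.add_apply, LinearMap.smul_apply, smul_eq_mul, hB.eq v u]
  linear_combination (-2) * h₃ - 2 * B u v * h₁

variable [NeZero (2 : 𝕜)]

theorem separatingLeft_cycForm (hB : B.SeparatingLeft) : (cycForm B).SeparatingLeft := by
  intro w hw
  have hw₁ : w.1 = 0 := by simpa [cyc, two_ne_zero] using hw (0, 0, 1)
  have hw₂ : w.2.1 = 0 := hB _ fun y => by simpa [cyc] using hw (0, y, 0)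
  have hw₃ : w.2.2 = 0 := by simpa [cyc, two_ne_zero] using hw (1, 0, 0)
  exact Prod.ext hw₁ (Prod.ext hw₂ hw₃)

theorem linearIndependent_qc_qc {u v : W} (huv : u ≠ v) :
    LinearIndependent 𝕜 ![qc B u, qc B v] := by
  refine LinearIndependent.pair_iff.2 fun s t hst => ?_
  simp only [qc, Prod.smul_mk, Prod.mk_add_mk, Prod.mk_eq_zero, smul_eq_mul] at hst
  obtain ⟨h₁, h₂, -⟩ := hst
  have ht : t = -s := by linear_combination h₁
  have hsuv : ((-2 : 𝕜) * s) • (u - v) = 0 := by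
    rw [ht] at h₂
    linear_combination (norm := module) h₂
  have hs : s = 0 := by simpa [sub_eq_zero, huv, two_ne_zero] using hsuv
  exact ⟨hs, by rw [ht, hs, neg_zero]⟩

end Cycles

theorem prop4a_identity_or_reflection_general
    (B : LinearMap.BilinForm K E)
    (hdim : Module.finrank K E = 2)
    (hsymm : ∀ x y : E, B x y = B y x)
    (hpos : ∀ x : E, x ≠ 0 → 0 < B x x)
    (i : E)
    (l : K × E × K) (hl : cyc B l l ≠ 0)
    (hlp : cyc B l ((0 : K), i, (0 : K)) = 0)
    (u v : E) (hu : B i u < 0) (hv : B i v < 0) (huv : u ≠ v)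
    (hlu : cyc B l (qc B u) = 0) (hlv : cyc B l (qc B v) = 0)
    (T : (K × E × K) →ₗ[K] (K × E × K))
    (hT : ∀ x y : K × E × K, cyc B (T x) (T y) = cyc B x y)
    (hTp : T ((0 : K), i, (0 : K)) = ((0 : K), i, (0 : K)))
    (hTu : T (qc B u) = qc B u) (hTv : T (qc B v) = qc B v) :
    (∀ x : K × E × K, T x = x) ∨
    (∀ x : K × E × K, T x = x - (2 * (cyc B x l / cyc B l l)) • l) := by
  have hB : B.IsSymm := ⟨hsymm⟩
  have hBsep : B.SeparatingLeft := fun x hx => by_contra fun h => (hpos x h).ne' (hx x)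
  have : FiniteDimensional K E := .of_finrank_pos (by omega)
  let a : Fin 3 → K × E × K := ![((0 : K), i, (0 : K)), qc B u, qc B v]
  have hli : LinearIndependent K a :=
    (linearIndependent_qc_qc huv).finCons (notMem_span_qc_qc hB (add_neg hu hv).ne)
  have hla : ∀ j, cycForm B l (a j) = 0 :=
    Fin.forall_fin_succ.2 ⟨hlp, Fin.forall_fin_two.2 ⟨hlu, hlv⟩⟩
  have hTa : ∀ j, T (a j) = a j :=
    Fin.forall_fin_succ.2 ⟨hTp, Fin.forall_fin_two.2 ⟨hTu, hTv⟩⟩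
  have hspan := (cycForm B).span_insert_eq_top_of_linearIndependent hli hl hla (by simp [hdim])
  rcases LinearMap.BilinForm.eq_id_or_reflection_of_isometry (separatingLeft_cycForm hBsep)
    (isSymm_cycForm hB) hT hl hla hspan hTa with h | h
  · exact Or.inl fun x => by rw [h, LinearMap.id_apply]
  · exact Or.inr h

/-- Proposition 4(a): an orthogonal transformation of `F` fixing `p` and two distinct
points of a line `L` is either the identity or the reflection along the cycle of `L`. -/
theorem prop4a_identity_or_reflection
    (B : LinearMap.BilinForm K E)
    (heuc : ∀ x : K, 0 ≤ x → ∃ y : K, y * y = x)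
    (hdim : Module.finrank K E = 2)
    (hsymm : ∀ x y : E, B x y = B y x)
    (hpos : ∀ x : E, x ≠ 0 → 0 < B x x)
    (i : E) (hi : B i i = 1)
    (l : K × E × K) (hl : cyc B l l ≠ 0)
    (hlp : cyc B l ((0 : K), i, (0 : K)) = 0)
    (u v : E) (hu : B i u < 0) (hv : B i v < 0) (huv : u ≠ v)
    (hlu : cyc B l (qc B u) = 0) (hlv : cyc B l (qc B v) = 0)
    (T : (K × E × K) →ₗ[K] (K × E × K))
    (hT : ∀ x y : K × E × K, cyc B (T x) (T y) = cyc B x y)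
    (hTp : T ((0 : K), i, (0 : K)) = ((0 : K), i, (0 : K)))
    (hTu : T (qc B u) = qc B u) (hTv : T (qc B v) = qc B v) :
    (∀ x : K × E × K, T x = x) ∨
    (∀ x : K × E × K, T x = x - (2 * (cyc B x l / cyc B l l)) • l) :=
  prop4a_identity_or_reflection_general B hdim hsymm hpos i l hl hlp u v hu hv huv hlu hlv T hT hTp
    hTu hTv
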